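/- Assume ℓ, H : I → ℝ and G₀ : ℓ(I)−ℓ(I) → ℝ are differentiable functions satisfying G₀(ℓ(x)−ℓ(y)) = H((x+y)/2) − (H(x)+H(y))/2 for all x, y ∈ I, and suppose ℓ' does not vanish on I. Then the pair of functions (φ, f) given by φ := H' and f := 1/ℓ' solves the functional equation φ((x+y)/2)(f(x)+f(y)) = φ(x)f(x) + φ(y)f(y) for all x, y ∈ I. -/

import Mathlib

/-!
Differentiating `G₀(ℓ x - ℓ y) = H((x+y)/2) - (H x + H y)/2` in `x` and in `y` gives
`G₀'(t) ℓ'(x) = (H'(m) - H'(x))/2` and `-G₀'(t) ℓ'(y) = (H'(m) - H'(y))/2`, with `m` the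
midpoint and `t = ℓ x - ℓ y`. Dividing by `ℓ'(x)` resp. `ℓ'(y)` and adding eliminates `G₀'(t)`,
which is exactly the functional equation for `φ = H'`, `f = 1/ℓ'`.
-/

open Filter Topology

theorem Set.OrdConnected.add_div_two_mem {I : Set ℝ} (hI : I.OrdConnected) {x y : ℝ}
    (hx : x ∈ I) (hy : y ∈ I) : (x + y) / 2 ∈ I := by
  rcases le_total x y with h | h
  · exact hI.out hx hy ⟨by linarith, by linarith⟩
  · exact hI.out hy hx ⟨by linarith, by linarith⟩

theorem mul_deriv_eq_of_comp_eq_jensenGap {G ℓ H : ℝ → ℝ} {g x y : ℝ}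
    (hG : HasDerivAt G g (ℓ x)) (hℓ : DifferentiableAt ℝ ℓ x)
    (hHm : DifferentiableAt ℝ H ((x + y) / 2)) (hHx : DifferentiableAt ℝ H x)
    (h : ∀ᶠ u in 𝓝 x, G (ℓ u) = H ((u + y) / 2) - (H u + H y) / 2) :
    g * deriv ℓ x = (deriv H ((x + y) / 2) - deriv H x) / 2 := by
  have hmid : HasDerivAt (fun u : ℝ => (u + y) / 2) (1 / 2) x := by
    simpa using ((hasDerivAt_id x).add_const y).div_const 2
  have hrhs : HasDerivAt (fun u => H ((u + y) / 2) - (H u + H y) / 2)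
      (deriv H ((x + y) / 2) * (1 / 2) - deriv H x / 2) x :=
    (hHm.hasDerivAt.comp x hmid).sub ((hHx.hasDerivAt.add_const (H y)).div_const 2)
  have hlhs : HasDerivAt (fun u => G (ℓ u)) (g * deriv ℓ x) x := hG.comp x hℓ.hasDerivAt
  rw [(hlhs.congr_of_eventuallyEq (h.mono fun _ hu => hu.symm)).unique hrhs]
  ring

theorem stmt18_general (I : Set ℝ) (hIopen : IsOpen I) (hIconn : I.OrdConnected)
    (ℓ H G₀ : ℝ → ℝ)
    (hℓ : ∀ x ∈ I, DifferentiableAt ℝ ℓ x)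
    (hH : ∀ x ∈ I, DifferentiableAt ℝ H x)
    (hG₀ : ∀ t : ℝ, (∃ x ∈ I, ∃ y ∈ I, t = ℓ x - ℓ y) → DifferentiableAt ℝ G₀ t)
    (hℓ' : ∀ x ∈ I, deriv ℓ x ≠ 0)
    (heq : ∀ x ∈ I, ∀ y ∈ I,
      G₀ (ℓ x - ℓ y) = H ((x + y) / 2) - (H x + H y) / 2) :
    ∀ x ∈ I, ∀ y ∈ I,
      deriv H ((x + y) / 2) * (1 / deriv ℓ x + 1 / deriv ℓ y) =
        deriv H x * (1 / deriv ℓ x) + deriv H y * (1 / deriv ℓ y) := by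
  intro x hx y hy
  have hG : HasDerivAt G₀ (deriv G₀ (ℓ x - ℓ y)) (ℓ x - ℓ y) :=
    (hG₀ _ ⟨x, hx, y, hy, rfl⟩).hasDerivAt
  have hHm := hH _ (hIconn.add_div_two_mem hx hy)
  have hderiv_x : deriv G₀ (ℓ x - ℓ y) * deriv ℓ x = (deriv H ((x + y) / 2) - deriv H x) / 2 :=
    mul_deriv_eq_of_comp_eq_jensenGap (hG.comp_sub_const _ _) (hℓ x hx) hHm (hH x hx)
      (eventually_of_mem (hIopen.mem_nhds hx) fun u hu => heq u hu y hy)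
  have hderiv_y : -deriv G₀ (ℓ x - ℓ y) * deriv ℓ y =
      (deriv H ((x + y) / 2) - deriv H y) / 2 := by
    rw [add_comm x y] at hHm ⊢
    refine mul_deriv_eq_of_comp_eq_jensenGap (hG.comp_const_sub _ _) (hℓ y hy) hHm (hH y hy)
      (eventually_of_mem (hIopen.mem_nhds hy) fun v hv => ?_)
    rw [heq x hx v hv, add_comm x v, add_comm (H x)]
  have hℓx := hℓ' x hx
  have hℓy := hℓ' y hy
  field_simp
  linear_combination (-2) * deriv ℓ y * hderiv_x - 2 * deriv ℓ x * hderiv_y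

/-- Assume `ℓ, H : I → ℝ` and `G₀ : ℓ(I)−ℓ(I) → ℝ` are differentiable
functions satisfying `G₀(ℓ(x)−ℓ(y)) = H((x+y)/2) − (H(x)+H(y))/2` for all `x, y ∈ I`, and
suppose `ℓ'` does not vanish on `I`.  Then the pair `(φ, f)` given by `φ := H'` and
`f := 1/ℓ'` solves the functional equation
`φ((x+y)/2)(f(x)+f(y)) = φ(x)f(x) + φ(y)f(y)` for all `x, y ∈ I`. -/
theorem stmt18 (I : Set ℝ) (hIopen : IsOpen I) (hIconn : I.OrdConnected)
    (hIne : I.Nonempty) (ℓ H G₀ : ℝ → ℝ)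
    (hℓ : ∀ x ∈ I, DifferentiableAt ℝ ℓ x)
    (hH : ∀ x ∈ I, DifferentiableAt ℝ H x)
    (hG₀ : ∀ t : ℝ, (∃ x ∈ I, ∃ y ∈ I, t = ℓ x - ℓ y) → DifferentiableAt ℝ G₀ t)
    (hℓ' : ∀ x ∈ I, deriv ℓ x ≠ 0)
    (heq : ∀ x ∈ I, ∀ y ∈ I,
      G₀ (ℓ x - ℓ y) = H ((x + y) / 2) - (H x + H y) / 2) :
    ∀ x ∈ I, ∀ y ∈ I,
      deriv H ((x + y) / 2) * (1 / deriv ℓ x + 1 / deriv ℓ y) =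
        deriv H x * (1 / deriv ℓ x) + deriv H y * (1 / deriv ℓ y) :=
  stmt18_general I hIopen hIconn ℓ H G₀ hℓ hH hG₀ hℓ' heq
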